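/- arXiv:1205.3647 — 3 statements merged into one kernel-verified Lean document; each statement's English description precedes it below -/
import Mathlib

section
/- If a linear code C in F_q^n has a t-error-correcting pair (A,B), then the minimum distance of C is at least 2t+1. -/
open Matrix Module

/-- The span of all coordinatewise (star) products of elements of `A` and `B`. -/
def starSpan {F : Type*} [Field F] {n : ℕ} (A B : Submodule F (Fin n → F)) :
    Submodule F (Fin n → F) :=
  Submodule.span F {x | ∃ a ∈ A, ∃ b ∈ B, x = a * b}

/-- The dual code, with respect to the standard inner product. -/
def dualCode {F : Type*} [Field F] {n : ℕ} (C : Submodule F (Fin n → F)) :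
    Submodule F (Fin n → F) where
  carrier := {x | ∀ c ∈ C, x ⬝ᵥ c = 0}
  add_mem' := by
    intro a b ha hb c hc
    simp [add_dotProduct, ha c hc, hb c hc]
  zero_mem' := by
    intro c hc
    simp
  smul_mem' := by
    intro r a ha c hc
    simp [smul_dotProduct, ha c hc]

/-- Minimum Hamming distance (= minimum weight of a nonzero codeword) of a linear code. -/
noncomputable def minDist {F : Type*} [Field F] [DecidableEq F] {n : ℕ}
    (C : Submodule F (Fin n → F)) : ℕ :=
  sInf {w | ∃ c ∈ C, c ≠ 0 ∧ w = hammingNorm c}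

/-- `(A, B)` is a `t`-error-correcting pair for the code `C` over `F`, where `A` and `B` are
codes over an extension field `K` of `F`: (E.1) `(A*B) ⊥ C`; (E.2) `dim A > t`;
(E.3) `d(B^⊥) > t`; (E.4) `d(A) + d(C) > n`. -/
def IsECP (F K : Type*) [Field F] [Field K] [Algebra F K] [DecidableEq F] [DecidableEq K]
    {n : ℕ} (t : ℕ) (A B : Submodule K (Fin n → K)) (C : Submodule F (Fin n → F)) : Prop :=
  (∀ a ∈ A, ∀ b ∈ B, ∀ c ∈ C, (a * b) ⬝ᵥ (fun i => algebraMap F K (c i)) = 0) ∧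
  t < finrank K A ∧
  t < minDist (dualCode B) ∧
  n < minDist A + minDist C

/-- The generalized Reed–Solomon code `GRS_k(a, b)`. -/
def GRS (F : Type*) [Field F] {n : ℕ} (k : ℕ) (a b : Fin n → F) : Submodule F (Fin n → F) :=
  Submodule.span F
    {v | ∃ f : Polynomial F, f.degree < (k : WithBot ℕ) ∧ v = fun i => f.eval (a i) * b i}

/-!
Let `c ∈ C` be nonzero of weight `w ≤ 2t`. Since `dim A > t`, some nonzero `a ∈ A` vanishes on
`min t w` coordinates of the support of `c`. By (E.1) the product `a * c` lies in `B^⊥`, and its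
weight is at most `w - min t w ≤ t < d(B^⊥)`, so `a * c = 0`. Then `a` vanishes on the support
of `c`, whence `d(A) + d(C) ≤ wt a + wt c ≤ n`, contradicting (E.4).
-/

open Finset

section HammingNorm

variable {ι R : Type*} [Fintype ι] [DecidableEq ι] [DecidableEq R] [MulZeroClass R]

lemma hammingNorm_mul_le_sub_card {x y : ι → R} {I : Finset ι}
    (hI : I ⊆ ({i | y i ≠ 0} : Finset ι)) (hx : ∀ i ∈ I, x i = 0) : hammingNorm (x * y) ≤ hammingNorm y - #I := by
  have hsupp : ({i | (x * y) i ≠ 0} : Finset ι) ⊆ ({i | y i ≠ 0} : Finset ι) \ I := by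
    intro i hi
    simp only [mem_filter, mem_univ, true_and, Pi.mul_apply] at hi
    refine mem_sdiff.mpr ⟨by simpa using right_ne_zero_of_mul hi, fun hiI => ?_⟩
    exact hi (by rw [hx i hiI, zero_mul])
  calc hammingNorm (x * y) ≤ #(({i | y i ≠ 0} : Finset ι) \ I) := card_le_card hsupp
    _ = hammingNorm y - #I := card_sdiff_of_subset hI

lemma hammingNorm_add_hammingNorm_le_of_mul_eq_zero [NoZeroDivisors R] {x y : ι → R}
    (h : x * y = 0) : hammingNorm x + hammingNorm y ≤ Fintype.card ι := by
  have hdisj : Disjoint ({i | x i ≠ 0} : Finset ι) ({i | y i ≠ 0} : Finset ι) := by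
    refine disjoint_filter.mpr fun i _ hxi hyi => ?_
    exact mul_ne_zero hxi hyi (congrFun h i)
  calc hammingNorm x + hammingNorm y
        = #(({i | x i ≠ 0} : Finset ι) ∪ ({i | y i ≠ 0} : Finset ι)) :=
          (card_union_of_disjoint hdisj).symm
    _ ≤ Fintype.card ι := card_le_univ _

end HammingNorm

lemma Submodule.exists_ne_zero_forall_eq_zero {K ι : Type*} [Field K] [Fintype ι]
    (A : Submodule K (ι → K)) {I : Finset ι} (hI : #I < finrank K A) :
    ∃ a ∈ A, a ≠ 0 ∧ ∀ i ∈ I, a i = 0 := by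
  let restrict : A →ₗ[K] (I → K) := LinearMap.pi fun i => (LinearMap.proj i.1).comp A.subtype
  have hker : LinearMap.ker restrict ≠ ⊥ :=
    LinearMap.ker_ne_bot_of_finrank_lt (by rwa [Module.finrank_fintype_fun_eq_card,
      Fintype.card_coe])
  obtain ⟨a, ha, h0⟩ := (Submodule.ne_bot_iff _).mp hker
  refine ⟨a, a.2, by simpa using h0, fun i hi => ?_⟩
  simpa [restrict] using congrFun (LinearMap.mem_ker.mp ha) ⟨i, hi⟩

section MinDist

variable {F : Type*} [Field F] [DecidableEq F] {n : ℕ} {C : Submodule F (Fin n → F)}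

lemma minDist_le_hammingNorm {c : Fin n → F} (hc : c ∈ C) (h0 : c ≠ 0) :
    minDist C ≤ hammingNorm c :=
  Nat.sInf_le ⟨c, hc, h0, rfl⟩

lemma eq_zero_of_hammingNorm_lt_minDist {c : Fin n → F} (hc : c ∈ C)
    (h : hammingNorm c < minDist C) : c = 0 := by
  by_contra h0
  exact (minDist_le_hammingNorm hc h0).not_gt h

lemma minDist_le_length (hC : C ≠ ⊥) : minDist C ≤ n := by
  obtain ⟨c, hc, h0⟩ := (Submodule.ne_bot_iff C).mp hC
  calc minDist C ≤ hammingNorm c := minDist_le_hammingNorm hc h0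
    _ ≤ n := by simpa using hammingNorm_le_card_fintype (x := c)

lemma le_minDist {k : ℕ} (hC : C ≠ ⊥) (h : ∀ c ∈ C, c ≠ 0 → k ≤ hammingNorm c) :
    k ≤ minDist C := by
  obtain ⟨c, hc, h0⟩ := (Submodule.ne_bot_iff C).mp hC
  refine le_csInf ⟨_, c, hc, h0, rfl⟩ ?_
  rintro _ ⟨c, hc, h0, rfl⟩
  exact h c hc h0

end MinDist

namespace IsECP

variable {F K : Type*} [Field F] [Field K] [Algebra F K] [DecidableEq F] [DecidableEq K]
  {n t : ℕ} {A B : Submodule K (Fin n → K)} {C : Submodule F (Fin n → F)}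

lemma code_ne_bot (h : IsECP F K t A B C) : C ≠ ⊥ := by
  obtain ⟨-, hdimA, -, hdist⟩ := h
  have hA : A ≠ ⊥ := fun hA => by rw [hA, finrank_bot] at hdimA; omega
  rintro rfl
  -- `minDist ⊥ = sInf ∅ = 0`, so (E.4) would force `d(A) > n`.
  have hC0 : minDist (⊥ : Submodule F (Fin n → F)) = 0 := by
    simp [minDist]
  have := minDist_le_length hA
  omega

lemma mul_mem_dualCode (h : IsECP F K t A B C) {a : Fin n → K} (ha : a ∈ A)
    {c : Fin n → F} (hc : c ∈ C) : (a * fun i => algebraMap F K (c i)) ∈ dualCode B := by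
  intro b hb
  rw [← h.1 a ha b hb c hc]
  simp only [dotProduct, Pi.mul_apply]
  exact sum_congr rfl fun i _ => by ring

lemma le_hammingNorm (h : IsECP F K t A B C) {c : Fin n → F} (hc : c ∈ C) (h0 : c ≠ 0) :
    2 * t + 1 ≤ hammingNorm c := by
  by_contra! hw
  set c' : Fin n → K := fun i => algebraMap F K (c i)
  have hwt : hammingNorm c' = hammingNorm c :=
    hammingNorm_comp (fun _ => algebraMap F K) (fun _ => (algebraMap F K).injective)
      (fun _ => map_zero _)
  obtain ⟨I, hIsupp, hIcard⟩ := exists_subset_card_eq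
    (s := ({i | c' i ≠ 0} : Finset (Fin n))) (n := min t (hammingNorm c))
    (by rw [← hammingNorm, hwt]; omega)
  have hdimA : t < finrank K A := h.2.1
  obtain ⟨a, haA, ha0, haI⟩ := A.exists_ne_zero_forall_eq_zero (I := I) (by omega)
  have hz : a * c' = 0 := by
    refine eq_zero_of_hammingNorm_lt_minDist (h.mul_mem_dualCode haA hc) ?_
    have hwz := hammingNorm_mul_le_sub_card hIsupp haI
    have hdistB : t < minDist (dualCode B) := h.2.2.1
    omega
  have hsum : hammingNorm a + hammingNorm c' ≤ n := by
    simpa using hammingNorm_add_hammingNorm_le_of_mul_eq_zero hz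
  have hA := minDist_le_hammingNorm haA ha0
  have hC := minDist_le_hammingNorm hc h0
  have hdist : n < minDist A + minDist C := h.2.2.2
  omega

end IsECP

/-- If a linear code `C ⊆ F^n` has a `t`-error-correcting pair `(A, B)` (over an
extension field `K`), then the minimum distance of `C` is at least `2t + 1`. -/
theorem stmt3 {F K : Type*} [Field F] [Field K] [Algebra F K] [DecidableEq F] [DecidableEq K]
    {n t : ℕ} (A B : Submodule K (Fin n → K)) (C : Submodule F (Fin n → F))
    (h : IsECP F K t A B C) :
    2 * t + 1 ≤ minDist C :=
  le_minDist h.code_ne_bot fun _ hc h0 => h.le_hammingNorm hc h0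
end

section
/- Let C = GRS_k(a,b) with a an n-tuple of distinct elements of F_q, b an n-tuple of nonzero elements, and 2k-1 ≤ n. Then the square code C^(2) = ⟨C*C⟩ equals GRS_{2k-1}(a, b*b); in particular dim C^(2) = 2k-1. -/
open Matrix Module

/-!
The map `grsEval a b : f ↦ (f(a_i) b_i)_i` sends the polynomials of degree `< k` onto
`GRS_k(a,b)` and satisfies `grsEval a (b*b') (f g) = grsEval a b f * grsEval a b' g`, so the star
span of two GRS codes is the image of the product of their polynomial spaces. Polynomials of
degree `≤ k` times polynomials of degree `≤ l` span those of degree `≤ k + l`, because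
`X^m = X^i X^(m-i)` with `i = min m k`. The dimension is `2k - 1` because a nonzero polynomial of
degree `< n` cannot vanish at the `n` distinct points `a_i`, and the `b_i` are nonzero.
-/

open Polynomial

namespace Polynomial

theorem X_pow_mem_degreeLE {R : Type*} [Semiring R] {i k : ℕ} (h : i ≤ k) :
    (X ^ i : R[X]) ∈ degreeLE R k :=
  mem_degreeLE.2 ((degree_X_pow_le i).trans (WithBot.coe_le_coe.2 h))

theorem degreeLE_mul_degreeLE {R : Type*} [CommSemiring R] (k l : ℕ) :
    degreeLE R k * degreeLE R l = degreeLE R ↑(k + l) := by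
  classical
  apply le_antisymm
  · refine Submodule.mul_le.2 fun f hf g hg => mem_degreeLE.2 ?_
    rw [Nat.cast_add]
    exact (degree_mul_le f g).trans (add_le_add (mem_degreeLE.1 hf) (mem_degreeLE.1 hg))
  · rw [degreeLE_eq_span_X_pow, Submodule.span_le]
    intro p hp
    obtain ⟨m, hm, rfl⟩ := Finset.mem_image.1 hp
    have hm : m ≤ k + l := Nat.lt_succ_iff.1 (Finset.mem_range.1 hm)
    rw [show X ^ m = X ^ min m k * X ^ (m - min m k) by rw [← pow_add]; congr 1; omega]
    exact Submodule.mul_mem_mul (X_pow_mem_degreeLE (min_le_right m k))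
      (X_pow_mem_degreeLE (by omega))

end Polynomial

section GRS

variable {F : Type*} [Field F] {n : ℕ}

noncomputable def grsEval (a b : Fin n → F) : F[X] →ₗ[F] (Fin n → F) where
  toFun f i := f.eval (a i) * b i
  map_add' f g := by funext i; simp [add_mul]
  map_smul' c f := by funext i; simp [mul_assoc]

theorem grsEval_apply (a b : Fin n → F) (f : F[X]) (i : Fin n) :
    grsEval a b f i = f.eval (a i) * b i :=
  rfl

theorem grsEval_mul (a b b' : Fin n → F) (f g : F[X]) :
    grsEval a (b * b') (f * g) = grsEval a b f * grsEval a b' g := by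
  funext i
  simp only [grsEval_apply, Pi.mul_apply, eval_mul]
  ring

theorem GRS_eq_map_degreeLT (k : ℕ) (a b : Fin n → F) :
    GRS F k a b = (degreeLT F k).map (grsEval a b) := by
  rw [GRS, ← Submodule.span_eq (Submodule.map _ _)]
  congr 1
  ext v
  simp only [Set.mem_ofPred_eq, SetLike.mem_coe, Submodule.mem_map, mem_degreeLT]
  exact ⟨fun ⟨f, hf, hv⟩ => ⟨f, hf, hv.symm⟩, fun ⟨f, hf, hv⟩ => ⟨f, hf, hv.symm⟩⟩

theorem GRS_succ_eq_map_degreeLE (k : ℕ) (a b : Fin n → F) :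
    GRS F (k + 1) a b = (degreeLE F k).map (grsEval a b) := by
  rw [GRS_eq_map_degreeLT, degreeLT_succ_eq_degreeLE]

theorem starSpan_map_map {A : Type*} [Semiring A] [Algebra F A] (U V : Submodule F A)
    (φ ψ χ : A →ₗ[F] (Fin n → F)) (h : ∀ f g, χ (f * g) = φ f * ψ g) :
    starSpan (U.map φ) (V.map ψ) = (U * V).map χ := by
  rw [starSpan, Submodule.mul_eq_span_mul_set, Submodule.map_span]
  congr 1
  ext x
  simp only [Set.mem_ofPred_eq, Set.mem_image, Set.mem_mul, SetLike.mem_coe, Submodule.mem_map]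
  constructor
  · rintro ⟨_, ⟨f, hf, rfl⟩, _, ⟨g, hg, rfl⟩, rfl⟩
    exact ⟨f * g, ⟨f, hf, g, hg, rfl⟩, h f g⟩
  · rintro ⟨_, ⟨f, hf, g, hg, rfl⟩, rfl⟩
    exact ⟨φ f, ⟨f, hf, rfl⟩, ψ g, ⟨g, hg, rfl⟩, h f g⟩

theorem starSpan_GRS_succ (k l : ℕ) (a b b' : Fin n → F) :
    starSpan (GRS F (k + 1) a b) (GRS F (l + 1) a b') = GRS F (k + l + 1) a (b * b') := by
  rw [GRS_succ_eq_map_degreeLE, GRS_succ_eq_map_degreeLE, GRS_succ_eq_map_degreeLE,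
    starSpan_map_map _ _ _ _ _ (grsEval_mul a b b'), degreeLE_mul_degreeLE]

theorem eq_zero_of_grsEval_eq_zero {a b : Fin n → F} (ha : Function.Injective a)
    (hb : ∀ i, b i ≠ 0) {f : F[X]} (hf : f.degree < n) (h : grsEval a b f = 0) : f = 0 := by
  refine eq_zero_of_degree_lt_of_eval_index_eq_zero Finset.univ ha.injOn
    (by rwa [Finset.card_univ, Fintype.card_fin]) fun i _ => ?_
  exact (mul_eq_zero.1 (congrFun h i)).resolve_right (hb i)

theorem finrank_GRS {m : ℕ} (hm : m ≤ n) {a b : Fin n → F} (ha : Function.Injective a)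
    (hb : ∀ i, b i ≠ 0) : finrank F (GRS F m a b) = m := by
  have hinj : Function.Injective (grsEval a b ∘ₗ (degreeLT F m).subtype) := by
    rw [← LinearMap.ker_eq_bot, LinearMap.ker_eq_bot']
    rintro ⟨f, hf⟩ h
    exact Subtype.ext <| eq_zero_of_grsEval_eq_zero ha hb
      ((mem_degreeLT.1 hf).trans_le (WithBot.coe_le_coe.2 hm)) h
  rw [GRS_eq_map_degreeLT, ← Submodule.range_subtype (degreeLT F m), ← LinearMap.range_comp,
    LinearMap.finrank_range_of_inj hinj, (degreeLTEquiv F m).finrank_eq, finrank_fin_fun]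

end GRS

/-- For `C = GRS_k(a,b)` with `2k - 1 ≤ n`, `a` an `n`-tuple of distinct elements and `b`
an `n`-tuple of nonzero elements, the square code `C^(2) = ⟨C*C⟩` equals
`GRS_{2k-1}(a, b*b)`; in particular `dim C^(2) = 2k - 1`. -/
theorem stmt8 {F : Type*} [Field F] {n : ℕ} (k : ℕ) (hk : 1 ≤ k) (hkn : 2 * k - 1 ≤ n)
    (a b : Fin n → F) (ha : Function.Injective a) (hb : ∀ i, b i ≠ 0) :
    starSpan (GRS F k a b) (GRS F k a b) = GRS F (2 * k - 1) a (b * b) ∧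
    Module.finrank F (starSpan (GRS F k a b) (GRS F k a b)) = 2 * k - 1 := by
  obtain ⟨j, rfl⟩ := Nat.exists_eq_add_of_le' hk
  have hsq : starSpan (GRS F (j + 1) a b) (GRS F (j + 1) a b) =
      GRS F (2 * (j + 1) - 1) a (b * b) := by
    rw [starSpan_GRS_succ, show 2 * (j + 1) - 1 = j + j + 1 by omega]
  exact ⟨hsq, hsq ▸ finrank_GRS hkn ha fun i => mul_ne_zero (hb i) (hb i)⟩
end

section
/- Let C be an [n,k] linear code over F_q with generator matrix G = (I_k | P) in systematic form, and let D = C^⊥ with generator matrix H = (P^T | −I_{n−k}). Let L_P be the linear system with k equations Σ_{k<j<j'≤n} p_{i,j} p_{i,j'} Z_{j j'} = 0 (1 ≤ i ≤ k) in binom(n−k,2) variables, and let K^2(D) be the kernel of the symmetrization map σ: S^2(D) → D^(2). Then dim K(L_P) = dim K^2(D), where K(L_P) is the solution space of L_P. -/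
open Matrix Module

/-- Given a spanning family `g₁, …, g_k` of a code `C` (the rows of a generator matrix),
the linear map whose kernel is `K²(C)`, the kernel of the symmetrization map
`σ : S²(C) → C^(2)`: it sends a symmetric tensor `(X_{ii'})_{i ≤ i'}` to the vector with
`j`-th coordinate `∑_{i ≤ i'} g_{ij} g_{i'j} X_{ii'}`. -/
noncomputable def symKernelMap {F : Type*} [Field F] {ι : Type*} [Fintype ι] {k : ℕ}
    (g : Fin k → (ι → F)) :
    ({p : Fin k × Fin k // p.1 ≤ p.2} → F) →ₗ[F] (ι → F) :=
  LinearMap.pi fun j => ∑ p : {p : Fin k × Fin k // p.1 ≤ p.2},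
    (g p.1.1 j * g p.1.2 j) • LinearMap.proj p

/-- The linear system `L_P` of Faugère et al.: `k` linear equations
`∑_{j < j'} p_{ij} p_{ij'} Z_{jj'} = 0` (`1 ≤ i ≤ k`) in the `binom(m,2)` variables
`Z_{jj'}` indexed by pairs `j < j'` with `k < j < j' ≤ n`, `m = n - k`. Its kernel is
the solution space `K(L_P)`. -/
noncomputable def LPmap {F : Type*} [Field F] {k m : ℕ} (P : Matrix (Fin k) (Fin m) F) :
    ({p : Fin m × Fin m // p.1 < p.2} → F) →ₗ[F] (Fin k → F) :=
  LinearMap.pi fun i => ∑ p : {p : Fin m × Fin m // p.1 < p.2},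
    (P i p.1.1 * P i p.1.2) • LinearMap.proj p

/-- The rows of the parity check matrix `H = (Pᵀ | -I_{n-k})` of the code with systematic
generator matrix `G = (I_k | P)`; the `n` coordinates are indexed by `Fin k ⊕ Fin m` with
`m = n - k`. -/
def Hrows {F : Type*} [Field F] {k m : ℕ} (P : Matrix (Fin k) (Fin m) F) :
    Fin m → (Fin k ⊕ Fin m → F) :=
  fun r => Sum.elim (fun i => P i r) (fun s => if r = s then -1 else 0)

noncomputable def ext0 {F : Type*} [Field F] {m : ℕ} :
    ({p : Fin m × Fin m // p.1 < p.2} → F) →ₗ[F] ({p : Fin m × Fin m // p.1 ≤ p.2} → F) :=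
  LinearMap.pi fun p => if h : p.1.1 < p.1.2 then LinearMap.proj ⟨p.1, h⟩ else 0

lemma ext0_apply {F : Type*} [Field F] {m : ℕ} (z : {p : Fin m × Fin m // p.1 < p.2} → F)
    (p : {p : Fin m × Fin m // p.1 ≤ p.2}) :
    ext0 z p = if h : p.1.1 < p.1.2 then z ⟨p.1, h⟩ else 0 := by
  simp only [ext0, LinearMap.pi_apply]
  split_ifs with h <;> simp

lemma ext0_inj {F : Type*} [Field F] {m : ℕ} :
    Function.Injective (ext0 (F := F) (m := m)) := by
  intro a b hab
  funext q
  have := congrFun hab ⟨q.1, le_of_lt q.2⟩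
  rw [ext0_apply, ext0_apply] at this
  simpa [dif_pos q.2] using this

lemma symKernelMap_apply {F : Type*} [Field F] {ι : Type*} [Fintype ι] {k : ℕ}
    (g : Fin k → (ι → F)) (x : {p : Fin k × Fin k // p.1 ≤ p.2} → F) (j : ι) :
    symKernelMap g x j = ∑ p : {p : Fin k × Fin k // p.1 ≤ p.2},
      g p.1.1 j * g p.1.2 j * x p := by
  simp [symKernelMap, LinearMap.pi_apply]

lemma LPmap_apply {F : Type*} [Field F] {k m : ℕ} (P : Matrix (Fin k) (Fin m) F)
    (z : {p : Fin m × Fin m // p.1 < p.2} → F) (i : Fin k) :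
    LPmap P z i = ∑ p : {p : Fin m × Fin m // p.1 < p.2},
      P i p.1.1 * P i p.1.2 * z p := by
  simp [LPmap, LinearMap.pi_apply]

lemma sym_inr {F : Type*} [Field F] {k m : ℕ} (P : Matrix (Fin k) (Fin m) F)
    (x : {p : Fin m × Fin m // p.1 ≤ p.2} → F) (t : Fin m) :
    symKernelMap (Hrows P) x (Sum.inr t) = x ⟨(t, t), le_refl t⟩ := by
  rw [symKernelMap_apply]
  rw [Finset.sum_eq_single (⟨(t, t), le_refl t⟩ : {p : Fin m × Fin m // p.1 ≤ p.2})]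
  · simp [Hrows]
  · intro p _ hne
    have : ¬(p.1.1 = t ∧ p.1.2 = t) := by
      rintro ⟨h1, h2⟩
      exact hne (Subtype.ext (Prod.ext h1 h2))
    simp only [Hrows, Sum.elim_inr]
    rcases not_and_or.mp this with h | h <;> simp [h]
  · intro h; exact absurd (Finset.mem_univ _) h

lemma sym_inl {F : Type*} [Field F] {k m : ℕ} (P : Matrix (Fin k) (Fin m) F)
    (z : {p : Fin m × Fin m // p.1 < p.2} → F) (i : Fin k) :
    symKernelMap (Hrows P) (ext0 z) (Sum.inl i) = LPmap P z i := by
  rw [symKernelMap_apply, LPmap_apply]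
  rw [← Finset.sum_filter_of_ne
    (p := fun p : {p : Fin m × Fin m // p.1 ≤ p.2} => p.1.1 < p.1.2)]
  · refine Finset.sum_bij' (fun p hp => ⟨p.1, (Finset.mem_filter.mp hp).2⟩)
      (fun q _ => ⟨q.1, le_of_lt q.2⟩) ?_ ?_ ?_ ?_ ?_
    · intro a ha; exact Finset.mem_univ _
    · intro a ha
      exact Finset.mem_filter.mpr ⟨Finset.mem_univ _, a.2⟩
    · intro a ha; exact Subtype.ext rfl
    · intro a ha; exact Subtype.ext rfl
    · intro a ha
      have h := (Finset.mem_filter.mp ha).2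
      simp [Hrows, ext0_apply, dif_pos h]
  · intro p _ hne
    by_contra h
    exact hne (by simp [Hrows, ext0_apply, dif_neg h])

/-- Let `C` be an `[n, k]` code with systematic generator matrix `G = (I_k | P)` and let
`D = C^⊥` have generator matrix `H = (Pᵀ | -I_{n-k})`. Then the solution space of the
linear system `L_P` has the same dimension as `K²(D)`, the kernel of the symmetrization
map `σ : S²(D) → D^(2)` (computed with respect to the basis of `D` given by the rows
of `H`). -/
theorem stmt14 {F : Type*} [Field F] {k m : ℕ} (P : Matrix (Fin k) (Fin m) F) :
    Module.finrank F (LinearMap.ker (LPmap P)) =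
      Module.finrank F (LinearMap.ker (symKernelMap (Hrows P))) := by
  have hker : LinearMap.ker (symKernelMap (Hrows P)) =
      Submodule.map ext0 (LinearMap.ker (LPmap P)) := by
    ext x
    simp only [LinearMap.mem_ker, Submodule.mem_map]
    constructor
    · intro hx
      have hdiag : ∀ t : Fin m, x ⟨(t, t), le_refl t⟩ = 0 := by
        intro t
        have := congrFun hx (Sum.inr t)
        rwa [sym_inr] at this
      refine ⟨fun q => x ⟨q.1, le_of_lt q.2⟩, ?_, ?_⟩
      · have hx' : ext0 (fun q => x ⟨q.1, le_of_lt q.2⟩) = x := by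
          funext p
          rw [ext0_apply]
          split_ifs with h
          · exact congrArg x (Subtype.ext rfl)
          · have he : p.1.1 = p.1.2 := le_antisymm p.2 (le_of_not_gt h)
            have : p = ⟨(p.1.1, p.1.1), le_refl _⟩ := Subtype.ext (Prod.ext rfl he.symm)
            rw [this]; exact (hdiag p.1.1).symm
        funext i
        rw [← sym_inl P _ i, hx']
        exact congrFun hx (Sum.inl i)
      · funext p
        rw [ext0_apply]
        split_ifs with h
        · exact congrArg x (Subtype.ext rfl)
        · have he : p.1.1 = p.1.2 := le_antisymm p.2 (le_of_not_gt h)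
          have : p = ⟨(p.1.1, p.1.1), le_refl _⟩ := Subtype.ext (Prod.ext rfl he.symm)
          rw [this]; exact (hdiag p.1.1).symm
    · rintro ⟨z, hz, rfl⟩
      funext j
      cases j with
      | inl i => rw [sym_inl]; exact congrFun hz i
      | inr t =>
        rw [sym_inr, ext0_apply]
        simp
  rw [hker]
  exact (Submodule.equivMapOfInjective ext0 ext0_inj _).finrank_eq
end
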